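/- Let A be an n×n real matrix whose characteristic polynomial is λⁿ + a₁λ^{n−1} + ⋯ + aₙ, let b, c ∈ ℝⁿ, and let C, Ψ, Φ, J be as defined. Set Q = ΨΦ, r = Jᵀ Q b, and s = eₙᵀ Q b. Then for all x ∈ ℝⁿ and μ ∈ ℝ: (i) Q(Ax + bμ) = C(Qx + rμ) + s μ eₙ, and (ii) e₁ᵀ(Qx + rμ) = x₁. In particular, the affine change of variables y = Qx + rμ, ν = sμ transforms the linear system ẋ = Ax + bμ into ẏ = Cy + eₙν while leaving the first coordinate, and hence the discontinuity surface {x₁ = 0}, unchanged, and transforms the constant field ẋ = c into ẏ = Qc with e₁ᵀ Qc = c₁. -/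
import Mathlib


open Matrix Polynomial

/-- The `n×n` companion matrix with first column `(−a₁,…,−aₙ)ᵀ` and
superdiagonal ones (`a i` encodes `a_{i+1}`). -/
def compC {n : ℕ} (a : Fin (n + 1) → ℝ) : Matrix (Fin (n + 1)) (Fin (n + 1)) ℝ :=
  Matrix.of fun i j =>
    if (j : ℕ) = 0 then -a i else if (j : ℕ) = (i : ℕ) + 1 then 1 else 0

/-- The lower-triangular matrix `Ψ` with unit diagonal and `Ψ_{ij} = a_{i−j}`
for `i > j`. -/
def psiM {n : ℕ} (a : Fin (n + 1) → ℝ) : Matrix (Fin (n + 1)) (Fin (n + 1)) ℝ :=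
  Matrix.of fun i j =>
    if (i : ℕ) = (j : ℕ) then 1
    else if (j : ℕ) < (i : ℕ) then
      a ⟨(i : ℕ) - (j : ℕ) - 1,
        lt_of_le_of_lt (le_trans (Nat.sub_le _ _) (Nat.sub_le _ _)) i.isLt⟩
    else 0

/-- The observability matrix `Φ` whose `i`-th row is `e₁ᵀ A^{i−1}`. -/
noncomputable def phiM {n : ℕ} (A : Matrix (Fin (n + 1)) (Fin (n + 1)) ℝ) :
    Matrix (Fin (n + 1)) (Fin (n + 1)) ℝ :=
  Matrix.of fun i j => (A ^ (i : ℕ)) 0 j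

/-- The nilpotent shift matrix `J` with superdiagonal ones. -/
def shiftJ (n : ℕ) : Matrix (Fin (n + 1)) (Fin (n + 1)) ℝ :=
  Matrix.of fun i j => if (j : ℕ) = (i : ℕ) + 1 then 1 else 0

section Aux

open Finset

variable {n : ℕ}

/-- Extension of `a` to `ℕ` by zero. -/
noncomputable def aext (a : Fin (n + 1) → ℝ) : ℕ → ℝ :=
  fun k => if h : k < n + 1 then a ⟨k, h⟩ else 0

/-- The polynomial matrices `P m = A^m + a₁A^{m-1} + ⋯ + a_m`. -/
noncomputable def Pm (a : Fin (n + 1) → ℝ) (A : Matrix (Fin (n + 1)) (Fin (n + 1)) ℝ)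
    (m : ℕ) : Matrix (Fin (n + 1)) (Fin (n + 1)) ℝ :=
  A ^ m + ∑ k ∈ Finset.range m, aext a k • A ^ (m - 1 - k)

lemma sum_coe_ite (m : ℕ) (f : Fin (n + 1) → ℝ) :
    (∑ k : Fin (n + 1), if (k : ℕ) = m then f k else 0)
      = if h : m < n + 1 then f ⟨m, h⟩ else 0 := by
  split_ifs with h
  · rw [Finset.sum_eq_single (⟨m, h⟩ : Fin (n + 1))]
    · simp
    · intro k _ hk
      rw [if_neg]
      exact fun hc => hk (Fin.ext hc)
    · simp
  · apply Finset.sum_eq_zero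
    intro k _
    rw [if_neg]
    exact fun hc => h (hc ▸ k.isLt)

lemma Pm_mul (a : Fin (n + 1) → ℝ) (A : Matrix (Fin (n + 1)) (Fin (n + 1)) ℝ) (m : ℕ) :
    Pm a A m * A = Pm a A (m + 1) - aext a m • 1 := by
  have h1 : ∀ k ∈ Finset.range m, aext a k • A ^ (m - 1 - k) * A = aext a k • A ^ (m - k) := by
    intro k hk
    rw [Finset.mem_range] at hk
    rw [smul_mul_assoc, ← pow_succ]
    congr 2
    omega
  simp only [Pm, add_mul, Finset.sum_mul, ← pow_succ, Finset.sum_congr rfl h1,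
    Finset.sum_range_succ]
  have h3 : m + 1 - 1 - m = 0 := by omega
  have h2 : ∀ k ∈ Finset.range m, aext a k • A ^ (m + 1 - 1 - k) = aext a k • A ^ (m - k) :=
    fun k _ => rfl
  rw [Finset.sum_congr rfl h2, h3, pow_zero]
  abel

lemma Pm_top (a : Fin (n + 1) → ℝ) (A : Matrix (Fin (n + 1)) (Fin (n + 1)) ℝ)
    (hchar : A.charpoly
      = Polynomial.X ^ (n + 1)
        + ∑ i : Fin (n + 1), Polynomial.C (a i) * Polynomial.X ^ (n - (i : ℕ))) :
    Pm a A (n + 1) = 0 := by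
  have h0 : A ^ (n + 1) + ∑ i : Fin (n + 1), a i • A ^ (n - (i : ℕ)) = 0 := by
    have h := A.aeval_self_charpoly
    rw [hchar] at h
    simpa [map_add, map_sum, map_pow, _root_.map_mul, Polynomial.aeval_X, Polynomial.aeval_C,
      Algebra.smul_def] using h
  have h1 : ∑ i : Fin (n + 1), a i • A ^ (n - (i : ℕ))
      = ∑ k ∈ Finset.range (n + 1), aext a k • A ^ (n - k) := by
    rw [← Fin.sum_univ_eq_sum_range (fun k => aext a k • A ^ (n - k))]
    refine Finset.sum_congr rfl fun i _ => ?_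
    simp [aext, i.isLt]
  have h2 : ∀ k ∈ Finset.range (n + 1),
      aext a k • A ^ (n + 1 - 1 - k) = aext a k • A ^ (n - k) :=
    fun k _ => rfl
  rw [Pm, Finset.sum_congr rfl h2, ← h1, h0]

lemma Q_entry (a : Fin (n + 1) → ℝ) (A : Matrix (Fin (n + 1)) (Fin (n + 1)) ℝ)
    (i j : Fin (n + 1)) : (psiM a * phiM A) i j = Pm a A (i : ℕ) 0 j := by
  have hF : ∀ l : Fin (n + 1), psiM a i l * phiM A l j
      = (fun l : ℕ => (if (i : ℕ) = l then 1
          else if l < (i : ℕ) then aext a ((i : ℕ) - l - 1) else 0) * (A ^ l) 0 j) (l : ℕ) := by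
    intro l
    simp only [psiM, phiM, Matrix.of_apply]
    congr 1
    split_ifs with h1 h2
    · rfl
    · rw [aext, dif_pos]
    · rfl
  rw [Matrix.mul_apply]
  rw [Finset.sum_congr rfl fun l _ => hF l]
  rw [Fin.sum_univ_eq_sum_range (fun l : ℕ => (if (i : ℕ) = l then 1
          else if l < (i : ℕ) then aext a ((i : ℕ) - l - 1) else 0) * (A ^ l) 0 j) (n + 1)]
  have hsub : Finset.range ((i : ℕ) + 1) ⊆ Finset.range (n + 1) := by
    apply Finset.range_subset_range.2; omega
  rw [← Finset.sum_subset hsub]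
  · rw [Finset.sum_range_succ, if_pos rfl, one_mul]
    have hlt : ∀ l ∈ Finset.range (i : ℕ),
        (if (i : ℕ) = l then 1
          else if l < (i : ℕ) then aext a ((i : ℕ) - l - 1) else 0) * (A ^ l) 0 j
        = (fun k => aext a k * (A ^ ((i : ℕ) - 1 - k)) 0 j) ((i : ℕ) - 1 - l) := by
      intro l hl
      rw [Finset.mem_range] at hl
      have h1 : (i : ℕ) ≠ l := by omega
      have h2 : (i : ℕ) - 1 - ((i : ℕ) - l - 1) = l := by omega
      have h3 : (i : ℕ) - 1 - l = (i : ℕ) - l - 1 := by omega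
      simp only [if_neg h1, if_pos hl]
      rw [h3, h2]
    rw [Finset.sum_congr rfl hlt,
      Finset.sum_range_reflect (fun k => aext a k * (A ^ ((i : ℕ) - 1 - k)) 0 j) (i : ℕ)]
    simp [Pm, Matrix.add_apply, Matrix.sum_apply, add_comm]
  · intro l _ hl
    rw [Finset.mem_range, not_lt] at hl
    have h1 : (i : ℕ) ≠ l := by omega
    have h2 : ¬ l < (i : ℕ) := by omega
    simp [h1, h2]

lemma QA_eq (a : Fin (n + 1) → ℝ) (A : Matrix (Fin (n + 1)) (Fin (n + 1)) ℝ)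
    (hchar : A.charpoly
      = Polynomial.X ^ (n + 1)
        + ∑ i : Fin (n + 1), Polynomial.C (a i) * Polynomial.X ^ (n - (i : ℕ))) :
    psiM a * phiM A * A = compC a * (psiM a * phiM A) := by
  ext i j
  have hL : (psiM a * phiM A * A) i j
      = Pm a A ((i : ℕ) + 1) 0 j - a i * (1 : Matrix (Fin (n + 1)) (Fin (n + 1)) ℝ) 0 j := by
    rw [Matrix.mul_apply]
    have h : ∀ k, (psiM a * phiM A) i k * A k j = Pm a A (i : ℕ) 0 k * A k j := by
      intro k; rw [Q_entry]
    rw [Finset.sum_congr rfl fun k _ => h k, ← Matrix.mul_apply, Pm_mul]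
    have ha : aext a (i : ℕ) = a i := by simp [aext, i.isLt]
    simp [ha]
  rw [hL, Matrix.mul_apply]
  have hsplit : ∀ k : Fin (n + 1), compC a i k * (psiM a * phiM A) k j
      = (if (k : ℕ) = 0 then -a i * (psiM a * phiM A) k j else 0)
        + (if (k : ℕ) = (i : ℕ) + 1 then (psiM a * phiM A) k j else 0) := by
    intro k
    simp only [compC, Matrix.of_apply]
    split_ifs with h1 h2 <;> simp_all
  rw [Finset.sum_congr rfl fun k _ => hsplit k, Finset.sum_add_distrib,
    sum_coe_ite, sum_coe_ite]
  rw [dif_pos (Nat.succ_pos n)]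
  have h00 : (⟨0, Nat.succ_pos n⟩ : Fin (n + 1)) = 0 := rfl
  have hQ0 : (psiM a * phiM A) 0 j = (1 : Matrix (Fin (n + 1)) (Fin (n + 1)) ℝ) 0 j := by
    rw [Q_entry]
    simp [Pm]
  rw [h00, hQ0]
  by_cases hi : (i : ℕ) + 1 < n + 1
  · rw [dif_pos hi, Q_entry]
    ring
  · rw [dif_neg hi]
    have hn : (i : ℕ) + 1 = n + 1 := by omega
    rw [hn, Pm_top a A hchar]
    simp

lemma CJ_eq (a : Fin (n + 1) → ℝ) (v : Fin (n + 1) → ℝ) :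
    (compC a).mulVec ((shiftJ n).transpose.mulVec v)
      = v - v (Fin.last n) • (Pi.single (Fin.last n) (1 : ℝ) : Fin (n + 1) → ℝ) := by
  rw [Matrix.mulVec_mulVec]
  have hmat : compC a * (shiftJ n).transpose
      = Matrix.of fun i j : Fin (n + 1) =>
          if (i : ℕ) = (j : ℕ) ∧ (j : ℕ) < n then (1 : ℝ) else 0 := by
    ext i j
    rw [Matrix.mul_apply]
    have h : ∀ k : Fin (n + 1), compC a i k * (shiftJ n).transpose k j
        = if (k : ℕ) = (j : ℕ) + 1 then compC a i k else 0 := by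
      intro k
      simp only [shiftJ, Matrix.transpose_apply, Matrix.of_apply, mul_ite, mul_one, mul_zero]
    rw [Finset.sum_congr rfl fun k _ => h k, sum_coe_ite]
    simp only [Matrix.of_apply]
    by_cases hj : (j : ℕ) + 1 < n + 1
    · rw [dif_pos hj]
      simp only [compC, Matrix.of_apply]
      by_cases h2 : (i : ℕ) = (j : ℕ)
      · rw [if_neg (by omega), if_pos (by omega), if_pos ⟨h2, by omega⟩]
      · rw [if_neg (by omega), if_neg (by omega), if_neg (by omega)]
    · rw [dif_neg hj, if_neg (by omega)]
  rw [hmat]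
  funext k
  rw [Matrix.mulVec, dotProduct]
  have h : ∀ m : Fin (n + 1),
      (Matrix.of fun i j : Fin (n + 1) =>
        if (i : ℕ) = (j : ℕ) ∧ (j : ℕ) < n then (1 : ℝ) else 0) k m * v m
      = if (m : ℕ) = (k : ℕ) then (if (k : ℕ) < n then v m else 0) else 0 := by
    intro m
    simp only [Matrix.of_apply, ite_mul, one_mul, zero_mul]
    by_cases h1 : (m : ℕ) = (k : ℕ)
    · by_cases h2 : (k : ℕ) < n
      · rw [if_pos ⟨h1.symm, by omega⟩, if_pos h1, if_pos h2]
      · rw [if_neg (by omega), if_pos h1, if_neg h2]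
    · rw [if_neg (by omega), if_neg h1]
  rw [Finset.sum_congr rfl fun m _ => h m, sum_coe_ite, dif_pos k.isLt]
  simp only [Pi.sub_apply, Pi.smul_apply, Pi.single_apply, smul_eq_mul]
  by_cases hk : (k : ℕ) < n
  · have hne : k ≠ Fin.last n := by
      intro h'
      rw [h', Fin.val_last] at hk
      exact lt_irrefl _ hk
    rw [if_pos hk, if_neg hne, mul_zero, sub_zero]
  · have hkl : k = Fin.last n := Fin.ext (by rw [Fin.val_last]; have := k.isLt; omega)
    rw [if_neg hk, if_pos hkl, mul_one, hkl]
    ring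

lemma Jt_zero (n : ℕ) (v : Fin (n + 1) → ℝ) :
    (shiftJ n).transpose.mulVec v 0 = 0 := by
  rw [Matrix.mulVec, dotProduct]
  apply Finset.sum_eq_zero
  intro k _
  simp [shiftJ]

lemma Q_zero (a : Fin (n + 1) → ℝ) (A : Matrix (Fin (n + 1)) (Fin (n + 1)) ℝ)
    (v : Fin (n + 1) → ℝ) : (psiM a * phiM A).mulVec v 0 = v 0 := by
  rw [Matrix.mulVec, dotProduct]
  have h : ∀ k : Fin (n + 1), (psiM a * phiM A) 0 k * v k
      = if (k : ℕ) = 0 then v k else 0 := by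
    intro k
    rw [Q_entry]
    simp only [Pm, Fin.val_zero, pow_zero, Finset.range_zero, Finset.sum_empty, add_zero,
      Matrix.one_apply]
    by_cases hkk : (0 : Fin (n + 1)) = k
    · simp [← hkk]
    · rw [if_neg hkk, if_neg (by rw [Fin.ext_iff, Fin.val_zero] at hkk; omega), zero_mul]
  rw [Finset.sum_congr rfl fun k _ => h k, sum_coe_ite, dif_pos (Nat.succ_pos n)]
  rfl

end Aux

/-- Theorem 2 (normal-form transformation): with `Q = ΨΦ`, `r = JᵀQb`,
`s = eₙᵀQb`, the change of variables `y = Qx + rμ`, `ν = sμ` transforms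
`ẋ = Ax + bμ` into `ẏ = Cy + eₙν`, leaves the first coordinate unchanged,
and transforms `ẋ = c` into `ẏ = Qc` with `e₁ᵀQc = c₁`. -/
theorem normalForm_transformation (n : ℕ) (a : Fin (n + 1) → ℝ)
    (A : Matrix (Fin (n + 1)) (Fin (n + 1)) ℝ) (b c : Fin (n + 1) → ℝ)
    (hchar : A.charpoly
      = X ^ (n + 1) + ∑ i : Fin (n + 1), C (a i) * X ^ (n - (i : ℕ))) :
    (∀ (x : Fin (n + 1) → ℝ) (μ : ℝ),
      (psiM a * phiM A).mulVec (A.mulVec x + μ • b)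
          = (compC a).mulVec
              ((psiM a * phiM A).mulVec x
                + μ • (shiftJ n).transpose.mulVec ((psiM a * phiM A).mulVec b))
            + ((((psiM a * phiM A).mulVec b) (Fin.last n) * μ)
                • (Pi.single (Fin.last n) (1 : ℝ) : Fin (n + 1) → ℝ)) ∧
        ((psiM a * phiM A).mulVec x
            + μ • (shiftJ n).transpose.mulVec ((psiM a * phiM A).mulVec b)) 0
          = x 0) ∧
      ((psiM a * phiM A).mulVec c) 0 = c 0 := by
  refine ⟨fun x μ => ⟨?_, ?_⟩, ?_⟩
  · rw [Matrix.mulVec_add, Matrix.mulVec_smul, Matrix.mulVec_mulVec, QA_eq a A hchar,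
      ← Matrix.mulVec_mulVec, Matrix.mulVec_add, Matrix.mulVec_smul, CJ_eq]
    funext k
    simp only [Pi.add_apply, Pi.smul_apply, Pi.sub_apply, smul_eq_mul]
    ring
  · simp only [Pi.add_apply, Pi.smul_apply, Q_zero, Jt_zero, smul_eq_mul, mul_zero, add_zero]
  · exact Q_zero a A c
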